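/- arXiv:1910.07558 — 3 statements merged into one kernel-verified Lean document; each statement's English description precedes it below -/
import Mathlib

section
/- Let a be a hermitian element of a complex unital Banach algebra A and let φ be a continuous linear functional on A with ‖φ‖ = 1. Then the entire function F(z) = φ(exp(i a z)) = Σ_{n≥0} φ(aⁿ) zⁿ/n! has exponential type at most ρ(a), the spectral radius of a. -/
open Complex NormedSpace Filter

/-!
Since `‖φ‖ = 1`, `‖φ (aⁿ)‖ ≤ ‖aⁿ‖`, and the elementary bound `n! ≥ (n/e)ⁿ` turns the `n`-th term
of the limsup into at most `‖aⁿ‖^{1/n}`, whose limit is `ρ(a)` by Gelfand's formula.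
-/

open Nat in
theorem Real.div_exp_one_pow_le_factorial (n : ℕ) : ((n : ℝ) / Real.exp 1) ^ n ≤ n ! := by
  have h := Real.pow_div_factorial_le_exp (n : ℝ) n.cast_nonneg n
  rw [← Real.exp_one_pow, div_le_iff₀ (by positivity)] at h
  rw [div_pow, div_le_iff₀ (by positivity), mul_comm]
  exact h

theorem Real.mul_div_factorial_rpow_div_exp_one_le {x : ℝ} (hx : 0 ≤ x) {n : ℕ} (hn : n ≠ 0) :
    (n : ℝ) * (x / n.factorial) ^ ((1 : ℝ) / n) / Real.exp 1 ≤ x ^ ((1 : ℝ) / n) := by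
  have hn' : (0 : ℝ) < n := by positivity
  have hdiv : x / n.factorial ≤ (x ^ ((1 : ℝ) / n) * (Real.exp 1 / n)) ^ n := by
    rw [mul_pow, ← Real.rpow_natCast (x ^ _), ← Real.rpow_mul hx, one_div_mul_cancel hn'.ne',
      Real.rpow_one, div_eq_mul_inv x]
    gcongr
    rw [← inv_div, inv_pow, inv_le_inv₀ (by positivity) (by positivity)]
    exact Real.div_exp_one_pow_le_factorial n
  have hroot : (x / n.factorial) ^ ((1 : ℝ) / n) ≤ x ^ ((1 : ℝ) / n) * (Real.exp 1 / n) :=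
    calc (x / n.factorial) ^ ((1 : ℝ) / n)
        ≤ ((x ^ ((1 : ℝ) / n) * (Real.exp 1 / n)) ^ n) ^ ((1 : ℝ) / n) := by gcongr
      _ = x ^ ((1 : ℝ) / n) * (Real.exp 1 / n) := by
        rw [one_div, Real.pow_rpow_inv_natCast (by positivity) hn]
  calc (n : ℝ) * (x / n.factorial) ^ ((1 : ℝ) / n) / Real.exp 1
      ≤ n * (x ^ ((1 : ℝ) / n) * (Real.exp 1 / n)) / Real.exp 1 := by gcongr
    _ = x ^ ((1 : ℝ) / n) := by field_simp

theorem expType_le_spectralRadius_of_hermitian_general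
    {A : Type*} [NormedRing A] [NormedAlgebra ℂ A] [CompleteSpace A]
    (a : A)
    (φ : A →L[ℂ] ℂ) (hφ : ‖φ‖ = 1) :
    Filter.limsup
      (fun n : ℕ =>
        ENNReal.ofReal
          ((n : ℝ) * (‖φ (a ^ n)‖ / (n.factorial : ℝ)) ^ ((1 : ℝ) / n) / Real.exp 1))
      atTop ≤ spectralRadius ℂ a := by
  rw [← (spectrum.pow_norm_pow_one_div_tendsto_nhds_spectralRadius a).limsup_eq]
  refine limsup_le_limsup ?_
  filter_upwards [eventually_ne_atTop 0] with n hn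
  have hφa : ‖φ (a ^ n)‖ ≤ ‖a ^ n‖ := by simpa [hφ] using φ.le_opNorm (a ^ n)
  gcongr
  calc (n : ℝ) * (‖φ (a ^ n)‖ / n.factorial) ^ ((1 : ℝ) / n) / Real.exp 1
      ≤ ‖φ (a ^ n)‖ ^ ((1 : ℝ) / n) := Real.mul_div_factorial_rpow_div_exp_one_le (norm_nonneg _) hn
    _ ≤ ‖a ^ n‖ ^ ((1 : ℝ) / n) := by gcongr

/-- If `a` is hermitian and `φ` is a norm-one continuous linear functional, then the
entire function `F z = φ(exp(i a z)) = ∑ φ(aⁿ) zⁿ/n!` has exponential type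
`(1/e)·limsup n·|φ(aⁿ)/n!|^{1/n}` at most the spectral radius of `a`. -/
theorem expType_le_spectralRadius_of_hermitian
    {A : Type*} [NormedRing A] [NormedAlgebra ℂ A] [CompleteSpace A] [NormOneClass A]
    (a : A) (ha : ∀ t : ℝ, ‖NormedSpace.exp ((Complex.I * (t : ℂ)) • a)‖ = 1)
    (φ : A →L[ℂ] ℂ) (hφ : ‖φ‖ = 1) :
    Filter.limsup
      (fun n : ℕ =>
        ENNReal.ofReal
          ((n : ℝ) * (‖φ (a ^ n)‖ / (n.factorial : ℝ)) ^ ((1 : ℝ) / n) / Real.exp 1))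
      atTop ≤ spectralRadius ℂ a :=
  expType_le_spectralRadius_of_hermitian_general a φ hφ
end

section
/- For the functions g₊(t) = Σ_{k=1}^n 1/(t + ik) and g₋(t) = Σ_{k=1}^n 1/(t − ik) on ℝ, the sum g = g₊ + g₋ satisfies sup_ℝ |g| ≤ π, while sup_ℝ |g₋| ≥ |g₋(0)| = Σ_{k=1}^n 1/k ≥ log n. Hence the ratio sup|g₋| / sup|g| is at least (log n)/π. -/
open Complex Finset Real

/-! The `k`-th terms of `g₊` and `g₋` are conjugate, so they pair to the real number
`2t/(t² + k²)`, which for `t > 0` decreases in `k`; hence `g(t)` is at most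
`∫₀^∞ 2t/(t² + x²) dx = π`, and `g` is odd. At `t = 0` every term of `g₋` is `i/k`. -/

theorem inv_add_I_mul_add_inv_sub_I_mul (t k : ℝ) :
    ((t : ℂ) + I * k)⁻¹ + ((t : ℂ) - I * k)⁻¹ = ((2 * t / (t ^ 2 + k ^ 2) : ℝ) : ℂ) := by
  have hconj : (t : ℂ) - I * k = (starRingEnd ℂ) ((t : ℂ) + I * k) := by
    simp [conj_ofReal, conj_I, sub_eq_add_neg]
  rw [hconj, ← map_inv₀, add_conj, inv_re, normSq_apply]
  simp [mul_div_assoc, sq]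

theorem sum_Icc_div_sq_add_sq_le_arctan {t : ℝ} (ht : 0 < t) (n : ℕ) :
    ∑ k ∈ Icc 1 n, t / (t ^ 2 + (k : ℝ) ^ 2) ≤ Real.arctan (n / t) := by
  have hanti : AntitoneOn (fun x : ℝ => t / (t ^ 2 + x ^ 2)) (Set.Icc 0 (0 + n)) := by
    intro x hx y _ hxy
    have hx0 : 0 ≤ x := hx.1
    dsimp only
    gcongr
  have hsum_le := hanti.sum_le_integral
  rw [zero_add, integral_div_sq_add_sq, zero_div, arctan_zero, sub_zero] at hsum_le
  convert hsum_le using 1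
  simp only [zero_add]
  rw [range_eq_Ico, sum_Ico_add' (fun k : ℕ => t / (t ^ 2 + (k : ℝ) ^ 2)), zero_add,
    Ico_add_one_right_eq_Icc]

theorem sum_Icc_two_mul_div_sq_add_sq_le_pi (t : ℝ) (n : ℕ) :
    ∑ k ∈ Icc 1 n, 2 * t / (t ^ 2 + (k : ℝ) ^ 2) ≤ π := by
  rcases le_or_gt t 0 with ht | ht
  · refine (sum_nonpos fun k _ => ?_).trans pi_nonneg
    exact div_nonpos_of_nonpos_of_nonneg (by linarith) (by positivity)
  · calc ∑ k ∈ Icc 1 n, 2 * t / (t ^ 2 + (k : ℝ) ^ 2)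
        = 2 * ∑ k ∈ Icc 1 n, t / (t ^ 2 + (k : ℝ) ^ 2) := by simp only [mul_sum, mul_div_assoc]
      _ ≤ 2 * Real.arctan (n / t) := by gcongr; exact sum_Icc_div_sq_add_sq_le_arctan ht n
      _ ≤ π := by linarith [arctan_lt_pi_div_two (n / t)]

theorem abs_sum_Icc_two_mul_div_sq_add_sq_le_pi (t : ℝ) (n : ℕ) :
    |∑ k ∈ Icc 1 n, 2 * t / (t ^ 2 + (k : ℝ) ^ 2)| ≤ π := by
  have hneg := sum_Icc_two_mul_div_sq_add_sq_le_pi (-t) n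
  simp only [neg_sq, mul_neg, neg_div, sum_neg_distrib] at hneg
  exact abs_le.mpr ⟨by linarith, sum_Icc_two_mul_div_sq_add_sq_le_pi t n⟩

theorem simple_fractions_log_example_general (n : ℕ) :
    (∀ t : ℝ,
        ‖(∑ k ∈ Finset.Icc 1 n, ((t : ℂ) + Complex.I * k)⁻¹ +
          ∑ k ∈ Finset.Icc 1 n, ((t : ℂ) - Complex.I * k)⁻¹)‖ ≤ π) ∧
    ‖(∑ k ∈ Finset.Icc 1 n, ((0 : ℂ) - Complex.I * k)⁻¹)‖ =
      ∑ k ∈ Finset.Icc 1 n, (1 : ℝ) / k ∧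
    Real.log n ≤ ∑ k ∈ Finset.Icc 1 n, (1 : ℝ) / k := by
  refine ⟨fun t => ?_, ?_, ?_⟩
  · have hpair (k : ℕ) := inv_add_I_mul_add_inv_sub_I_mul t k
    simp only [ofReal_natCast] at hpair
    rw [← sum_add_distrib, sum_congr rfl fun k _ => hpair k, ← ofReal_sum, norm_real]
    exact abs_sum_Icc_two_mul_div_sq_add_sq_le_pi t n
  · have hterm (k : ℕ) : ((0 : ℂ) - I * k)⁻¹ = I * ((1 / k : ℝ) : ℂ) := by
      rw [zero_sub, inv_neg, mul_inv, inv_I]; push_cast; ring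
    rw [sum_congr rfl fun k _ => hterm k, ← mul_sum, ← ofReal_sum, norm_mul, norm_I, one_mul,
      norm_real, norm_of_nonneg (sum_nonneg fun k _ => by positivity)]
  · simpa [harmonic_eq_sum_Icc] using log_le_harmonic_floor n n.cast_nonneg

/-- For `g₊(t) = ∑_{k=1}^n 1/(t + i k)` and `g₋(t) = ∑_{k=1}^n 1/(t − i k)`,
the sum `g = g₊ + g₋` is bounded by `π` on `ℝ`, while
`|g₋(0)| = ∑_{k=1}^n 1/k ≥ log n`; hence `sup|g₋| / sup|g| ≥ (log n)/π`. -/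
theorem simple_fractions_log_example (n : ℕ) (hn : 1 ≤ n) :
    (∀ t : ℝ,
        ‖(∑ k ∈ Finset.Icc 1 n, ((t : ℂ) + Complex.I * k)⁻¹ +
          ∑ k ∈ Finset.Icc 1 n, ((t : ℂ) - Complex.I * k)⁻¹)‖ ≤ π) ∧
    ‖(∑ k ∈ Finset.Icc 1 n, ((0 : ℂ) - Complex.I * k)⁻¹)‖ =
      ∑ k ∈ Finset.Icc 1 n, (1 : ℝ) / k ∧
    Real.log n ≤ ∑ k ∈ Finset.Icc 1 n, (1 : ℝ) / k :=
  simple_fractions_log_example_general n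
end

section
/- The Borel transform acts on Taylor coefficients as follows: if f(w) = Σ_{n≥0} a_n/w^{n+1} converges for |w| > R, and γ is a positively oriented circle of radius r > R centered at 0, then F(z) := (1/2πi)∮_γ f(w)e^{wz} dw = Σ_{n≥0} (a_n/n!) z^n, and F is an entire function of exponential type at most R. -/
open Complex Metric

/-!
Convergence of the Laurent series at a point of modulus `ρ > R` bounds its coefficients by
`‖aₙ‖ ≤ C ρ^{n+1}`. Choosing `R < ρ < r`, the series `∑ aₙ w^{-n-1} e^{wz}` is dominated on the
circle `|w| = r` by a convergent geometric series, so it may be integrated termwise, and the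
Cauchy formula for derivatives gives `∮ e^{wz} w^{-n-1} dw = 2πi zⁿ/n!`. Choosing `ρ = R + ε`
instead, the same bound gives `|∑ aₙ zⁿ/n!| ≤ Cρ ∑ (ρ|z|)ⁿ/n! = Cρ e^{ρ|z|}`.
-/

theorem exists_norm_le_mul_norm_pow_succ_of_summable {𝕜 : Type*} [NormedDivisionRing 𝕜]
    {a : ℕ → 𝕜} {w : 𝕜} (hw : w ≠ 0) (h : Summable fun n => a n / w ^ (n + 1)) :
    ∃ C > (0 : ℝ), ∀ n, ‖a n‖ ≤ C * ‖w‖ ^ (n + 1) := by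
  obtain ⟨C, hC⟩ := h.tendsto_atTop_zero.norm.bddAbove_range
  refine ⟨max C 1, by positivity, fun n => ?_⟩
  have hn : ‖a n‖ / ‖w‖ ^ (n + 1) ≤ max C 1 := by
    simpa [norm_div, norm_pow] using (hC (Set.mem_range_self n)).trans (le_max_left C 1)
  rwa [div_le_iff₀ (by positivity)] at hn

theorem summable_norm_div_pow_succ_of_norm_lt {𝕜 : Type*} [NormedDivisionRing 𝕜]
    {a : ℕ → 𝕜} {w : 𝕜} {s : ℝ} (hw : w ≠ 0) (h : Summable fun n => a n / w ^ (n + 1))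
    (hs : ‖w‖ < s) : Summable fun n => ‖a n‖ / s ^ (n + 1) := by
  obtain ⟨C, -, hC⟩ := exists_norm_le_mul_norm_pow_succ_of_summable hw h
  have hs0 : 0 < s := (norm_nonneg w).trans_lt hs
  have hq : ‖w‖ / s < 1 := (div_lt_one hs0).2 hs
  refine Summable.of_nonneg_of_le (fun n => by positivity) (fun n => ?_)
    ((summable_geometric_of_lt_one (by positivity) hq).mul_left (C * (‖w‖ / s)))
  rw [div_le_iff₀ (by positivity)]
  calc ‖a n‖ ≤ C * ‖w‖ ^ (n + 1) := hC n
    _ = C * (‖w‖ / s) * (‖w‖ / s) ^ n * s ^ (n + 1) := by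
      rw [mul_assoc C, ← pow_succ', div_pow]
      field_simp

theorem hasSum_circleIntegral_of_norm_le {E : Type*} [NormedAddCommGroup E] [NormedSpace ℂ E]
    {F : ℕ → ℂ → E} {G : ℂ → E} {c : ℂ} {r : ℝ} {bound : ℕ → ℝ} (hr : 0 ≤ r)
    (hF : ∀ n, ContinuousOn (F n) (sphere c r))
    (h_bound : ∀ n, ∀ w ∈ sphere c r, ‖F n w‖ ≤ bound n) (h_summable : Summable bound)
    (h_lim : ∀ w ∈ sphere c r, HasSum (fun n => F n w) (G w)) :
    HasSum (fun n => ∮ w in C(c, r), F n w) (∮ w in C(c, r), G w) := by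
  refine intervalIntegral.hasSum_integral_of_dominated_convergence (fun n _ => r * bound n)
    (fun n => ?_) (fun n => .of_forall fun θ _ => ?_) (.of_forall fun θ _ => h_summable.mul_left r)
    intervalIntegrable_const
    (.of_forall fun θ _ => (h_lim _ (circleMap_mem_sphere c hr θ)).const_smul _)
  · rw [Set.uIoc_of_le Real.two_pi_pos.le]
    exact ((circleIntegrable_iff r).1 ((hF n).circleIntegrable hr)).aestronglyMeasurable
  · rw [norm_smul, deriv_circleMap, norm_mul, norm_circleMap_zero, norm_I, mul_one,
      abs_of_nonneg hr]
    gcongr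
    exact h_bound n _ (circleMap_mem_sphere c hr θ)

theorem circleIntegral_exp_mul_div_pow_succ {r : ℝ} (hr : 0 < r) (z : ℂ) (n : ℕ) :
    (∮ w in C(0, r), exp (w * z) / w ^ (n + 1)) = 2 * Real.pi * I / n.factorial * z ^ n := by
  have := (differentiable_exp.comp (differentiable_id.const_mul z)).differentiableOn
    |>.circleIntegral_one_div_sub_center_pow_smul (c := 0) hr n
  simp only [iteratedDeriv_cexp_const_mul, mul_zero, exp_zero, mul_one, sub_zero, smul_eq_mul,
    one_div_mul_eq_div, Function.comp_def, id] at this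
  simpa only [mul_comm z] using this

theorem hasSum_borel_transform {a : ℕ → ℂ} {f : ℂ → ℂ} {r : ℝ} (hr : 0 < r)
    (hf : ∀ w ∈ sphere (0 : ℂ) r, HasSum (fun n => a n / w ^ (n + 1)) (f w))
    (ha : Summable fun n => ‖a n‖ / r ^ (n + 1)) (z : ℂ) :
    HasSum (fun n => a n / n.factorial * z ^ n)
      ((2 * Real.pi * I)⁻¹ * ∮ w in C(0, r), f w * exp (w * z)) := by
  have hne : ∀ w ∈ sphere (0 : ℂ) r, w ≠ 0 := fun w hw => ne_zero_of_mem_sphere hr.ne' ⟨w, hw⟩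
  have hsum := hasSum_circleIntegral_of_norm_le (F := fun n w => a n / w ^ (n + 1) * exp (w * z))
    (bound := fun n => ‖a n‖ / r ^ (n + 1) * Real.exp (r * ‖z‖)) hr.le
    (fun n => by fun_prop (disch := exact fun w hw => pow_ne_zero _ (hne w hw)))
    (fun n w hw => ?_) (ha.mul_right _) (fun w hw => (hf w hw).mul_right _)
  · refine (hsum.mul_left (2 * Real.pi * I)⁻¹).congr_fun fun n => ?_
    have hterm : (∮ w in C(0, r), a n / w ^ (n + 1) * exp (w * z))
        = a n * (2 * Real.pi * I / n.factorial * z ^ n) := by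
      simp_rw [div_mul_eq_mul_div, mul_div_assoc]
      rw [circleIntegral.integral_const_mul, circleIntegral_exp_mul_div_pow_succ hr]
      ring
    rw [hterm]
    field_simp [two_pi_I_ne_zero]
  · rw [mem_sphere_zero_iff_norm] at hw
    rw [norm_mul, norm_div, norm_pow, hw]
    gcongr
    calc ‖exp (w * z)‖ ≤ Real.exp ‖w * z‖ := norm_exp_le_exp_norm _
      _ = Real.exp (r * ‖z‖) := by rw [norm_mul, hw]

theorem norm_tsum_div_factorial_mul_pow_le {a : ℕ → ℂ} {C ρ : ℝ}
    (ha : ∀ n, ‖a n‖ ≤ C * ρ ^ (n + 1)) (z : ℂ) :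
    ‖∑' n, a n / n.factorial * z ^ n‖ ≤ C * ρ * Real.exp (ρ * ‖z‖) := by
  have hexp : HasSum (fun n => (ρ * ‖z‖) ^ n / n.factorial) (Real.exp (ρ * ‖z‖)) := by
    rw [Real.exp_eq_exp_ℝ]
    exact NormedSpace.expSeries_div_hasSum_exp _
  refine tsum_of_norm_bounded (hexp.mul_left (C * ρ)) fun n => ?_
  rw [norm_mul, norm_div, norm_pow, Complex.norm_natCast]
  calc ‖a n‖ / n.factorial * ‖z‖ ^ n ≤ C * ρ ^ (n + 1) / n.factorial * ‖z‖ ^ n := by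
        gcongr
        exact ha n
    _ = C * ρ * ((ρ * ‖z‖) ^ n / n.factorial) := by ring

/-- The Borel transform acts on Taylor coefficients: if `f(w) = ∑ aₙ/w^{n+1}` for
`|w| > R` and `γ` is the circle `|w| = r` with `r > R`, then
`F(z) = (2πi)⁻¹ ∮_γ f(w) e^{wz} dw = ∑ (aₙ/n!) zⁿ`, and `F` is an entire function
of exponential type at most `R`. -/
theorem borel_transform_taylor_coeff
    (R : ℝ) (hR : 0 ≤ R) (a : ℕ → ℂ) (f : ℂ → ℂ)
    (hf : ∀ w : ℂ, R < ‖w‖ → HasSum (fun n => a n / w ^ (n + 1)) (f w))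
    (r : ℝ) (hr : R < r) :
    (∀ z : ℂ,
        (2 * Real.pi * Complex.I : ℂ)⁻¹ *
            circleIntegral (fun w => f w * Complex.exp (w * z)) 0 r =
          ∑' n : ℕ, a n / (n.factorial : ℂ) * z ^ n) ∧
    (∀ ε > (0 : ℝ), ∃ C > (0 : ℝ), ∀ z : ℂ,
        ‖∑' n : ℕ, a n / (n.factorial : ℂ) * z ^ n‖ ≤ C * Real.exp ((R + ε) * ‖z‖)) := by
  have hnorm : ∀ ρ : ℝ, R < ρ → ‖(ρ : ℂ)‖ = ρ := fun ρ hρ =>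
    by rw [norm_real, Real.norm_of_nonneg (hR.trans hρ.le)]
  have hne : ∀ ρ : ℝ, R < ρ → (ρ : ℂ) ≠ 0 := fun ρ hρ =>
    ofReal_ne_zero.2 (hR.trans_lt hρ).ne'
  have hsummable : ∀ ρ : ℝ, R < ρ → Summable fun n => a n / (ρ : ℂ) ^ (n + 1) := fun ρ hρ =>
    (hf ρ (by rwa [hnorm ρ hρ])).summable
  refine ⟨fun z => ?_, fun ε hε => ?_⟩
  · have hmid : R < (R + r) / 2 := by linarith
    have ha := summable_norm_div_pow_succ_of_norm_lt (s := r) (hne _ hmid) (hsummable _ hmid)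
      (by rw [hnorm _ hmid]; linarith)
    refine (hasSum_borel_transform (hR.trans_lt hr) (fun w hw => hf w ?_) ha z).tsum_eq.symm
    rwa [mem_sphere_zero_iff_norm.1 hw]
  · have hRε : R < R + ε := by linarith
    obtain ⟨C, hC, ha⟩ := exists_norm_le_mul_norm_pow_succ_of_summable (hne _ hRε)
      (hsummable _ hRε)
    rw [hnorm _ hRε] at ha
    exact ⟨C * (R + ε), by positivity, norm_tsum_div_factorial_mul_pow_le ha⟩
end
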